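/- arXiv:math/0305022 — 6 statements merged into one kernel-verified Lean document; each statement's English description precedes it below -/
import Mathlib

section
/- A function holomorphic on an annulus {z : r < |z - a| < R} (with 0 ≤ r < R ≤ ∞) can be represented on the annulus by a Laurent series Σ_{n ∈ ℤ} c_n (z - a)^n converging on the annulus. -/
/-!
Fix radii `r < ρ₁ < |z - a| < ρ₂ < R`. Applying the Cauchy–Goursat theorem for annuli to the
difference quotient `dslope f z` gives the Cauchy formula on the annulus,
`2πi f(z) = ∮_{|ζ-a|=ρ₂} f(ζ)/(ζ-z) dζ - ∮_{|ζ-a|=ρ₁} f(ζ)/(ζ-z) dζ`.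
Expanding `1/(ζ - z)` as a geometric series in `(z - a)/(ζ - a)` on the outer circle and in
`(ζ - a)/(z - a)` on the inner one turns the two integrals into the nonnegative and the negative
half of the Laurent series. By Cauchy–Goursat again the coefficients do not depend on the radius
of the circle they are computed on, so one radius serves every `z`.
-/

open Complex Metric Set Filter Topology MeasureTheory
open scoped ENNReal Real

theorem div_pow_mul_inv {α : Type*} [DivisionCommMonoid α] (a b : α) (n : ℕ) :
    (a / b) ^ n * b⁻¹ = a ^ n * b ^ (-(n : ℤ) - 1) := by
  rw [show -(n : ℤ) - 1 = -((n + 1 : ℕ) : ℤ) by push_cast; ring, zpow_neg, zpow_natCast, pow_succ,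
    mul_inv, div_pow, div_eq_mul_inv, mul_assoc]

theorem ENNReal.exists_lt_ofReal_lt {x : ℝ} {R : ℝ≥0∞} (h : ENNReal.ofReal x < R) :
    ∃ ρ : ℝ, x < ρ ∧ ENNReal.ofReal ρ < R := by
  obtain ⟨ρ, -, hxρ, hρR⟩ := ENNReal.lt_iff_exists_real_btwn.1 h
  exact ⟨ρ, (ENNReal.ofReal_lt_ofReal_iff'.1 hxρ).1, hρR⟩

section Metric

variable {X : Type*} [PseudoMetricSpace X] {c : X} {ρ₁ ρ₂ : ℝ}

theorem sphere_subset_closedBall_diff_ball {ρ : ℝ} (h₁ : ρ₁ ≤ ρ) (h₂ : ρ ≤ ρ₂) :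
    sphere c ρ ⊆ closedBall c ρ₂ \ ball c ρ₁ := fun z hz => by
  rw [mem_sphere] at hz
  simpa [hz] using ⟨h₂, h₁⟩

theorem closedBall_diff_ball_mem_nhds {z : X} (hz : z ∈ ball c ρ₂ \ closedBall c ρ₁) :
    closedBall c ρ₂ \ ball c ρ₁ ∈ 𝓝 z :=
  mem_of_superset ((isOpen_ball.sdiff isClosed_closedBall).mem_nhds hz)
    (sdiff_subset_sdiff ball_subset_closedBall ball_subset_closedBall)

end Metric

section Annulus

variable {c : ℂ} {ρ₁ ρ₂ : ℝ}

theorem circleIntegral_sub_inv_of_notMem_closedBall {w : ℂ} {ρ : ℝ} (hρ : 0 ≤ ρ)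
    (hw : w ∉ closedBall c ρ) : (∮ z in C(c, ρ), (z - w)⁻¹) = 0 :=
  circleIntegral_eq_zero_of_differentiable_on_off_countable hρ countable_empty
    ((continuousOn_id.sub continuousOn_const).inv₀ fun _ hz =>
      sub_ne_zero.2 (ne_of_mem_of_not_mem hz hw))
    fun _ hz => (differentiableAt_id.sub_const w).inv
      (sub_ne_zero.2 fun h => hw (h ▸ ball_subset_closedBall hz.1))

variable {E : Type*} [NormedAddCommGroup E] [NormedSpace ℂ E] {f : ℂ → E}

theorem DifferentiableOn.differentiableAt_of_mem_annulus {z : ℂ}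
    (hf : DifferentiableOn ℂ f (closedBall c ρ₂ \ ball c ρ₁))
    (hz : z ∈ ball c ρ₂ \ closedBall c ρ₁) : DifferentiableAt ℂ f z :=
  hf.differentiableAt (closedBall_diff_ball_mem_nhds hz)

theorem DifferentiableOn.circleIntegral_eq_of_annulus (h0 : 0 < ρ₁) (hle : ρ₁ ≤ ρ₂)
    (hf : DifferentiableOn ℂ f (closedBall c ρ₂ \ ball c ρ₁)) :
    (∮ z in C(c, ρ₂), f z) = ∮ z in C(c, ρ₁), f z :=
  circleIntegral_eq_of_differentiable_on_annulus_off_countable h0 hle countable_empty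
    hf.continuousOn fun _ hz => hf.differentiableAt_of_mem_annulus hz.1

variable [CompleteSpace E]

theorem circleIntegral_dslope {w : ℂ} {ρ : ℝ} (hρ : 0 ≤ ρ) (hw : w ∉ sphere c ρ)
    (hf : ContinuousOn f (sphere c ρ)) :
    (∮ z in C(c, ρ), dslope f w z) =
      (∮ z in C(c, ρ), (z - w)⁻¹ • f z) - (∮ z in C(c, ρ), (z - w)⁻¹) • f w := by
  have hne : ∀ z ∈ sphere c ρ, z ≠ w := fun z hz => ne_of_mem_of_not_mem hz hw
  have hinv : ContinuousOn (fun z => (z - w)⁻¹) (sphere c ρ) :=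
    (continuousOn_id.sub continuousOn_const).inv₀ fun z hz => sub_ne_zero.2 <| hne z hz
  have hdslope : EqOn (dslope f w) (fun z => (z - w)⁻¹ • f z - (z - w)⁻¹ • f w) (sphere c ρ) :=
    fun z hz => by rw [dslope_of_ne f (hne z hz), slope_def_module, smul_sub]
  rw [circleIntegral.integral_congr hρ hdslope, circleIntegral.integral_sub,
    circleIntegral.integral_smul_const]
  exacts [(hinv.smul hf).circleIntegrable hρ, (hinv.smul continuousOn_const).circleIntegrable hρ]

theorem DifferentiableOn.circleIntegral_sub_inv_smul_sub_of_annulus {w : ℂ} (h0 : 0 < ρ₁)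
    (hw₁ : ρ₁ < ‖w - c‖) (hw₂ : ‖w - c‖ < ρ₂)
    (hf : DifferentiableOn ℂ f (closedBall c ρ₂ \ ball c ρ₁)) :
    (∮ z in C(c, ρ₂), (z - w)⁻¹ • f z) - (∮ z in C(c, ρ₁), (z - w)⁻¹ • f z) =
      (2 * π * I : ℂ) • f w := by
  have hw : w ∈ ball c ρ₂ \ closedBall c ρ₁ := by
    simpa [dist_eq_norm] using ⟨hw₂, hw₁⟩
  have hρ : ρ₁ ≤ ρ₂ := (hw₁.trans hw₂).le
  have hdslope := circleIntegral_eq_of_differentiable_on_annulus_off_countable h0 hρ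
    (countable_singleton w)
    ((continuousOn_dslope (closedBall_diff_ball_mem_nhds hw)).2
      ⟨hf.continuousOn, hf.differentiableAt_of_mem_annulus hw⟩)
    fun z hz => (differentiableAt_dslope_of_ne hz.2).2 (hf.differentiableAt_of_mem_annulus hz.1)
  rw [circleIntegral_dslope (h0.trans (hw₁.trans hw₂)).le _ (hf.continuousOn.mono _),
    circleIntegral_dslope h0.le _ (hf.continuousOn.mono _),
    circleIntegral.integral_sub_inv_of_mem_ball hw.1,
    circleIntegral_sub_inv_of_notMem_closedBall h0.le hw.2, zero_smul, sub_zero] at hdslope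
  · rw [← hdslope, sub_sub_cancel]
  exacts [fun h => hw.2 (sphere_subset_closedBall h), sphere_subset_closedBall_diff_ball le_rfl hρ,
    fun h => hw.1.ne (mem_sphere.1 h), sphere_subset_closedBall_diff_ball hρ le_rfl]

end Annulus

section Laurent

variable {E : Type*} [NormedAddCommGroup E] [NormedSpace ℂ E] {f : ℂ → E} {c z : ℂ} {ρ : ℝ}

theorem hasSum_circleIntegral_sub_inv_smul_of_lt_norm {w : ℂ} {R : ℝ}
    (hf : CircleIntegrable f c R) (hR : 0 < R) (hw : R < ‖w‖) :
    HasSum (fun n : ℕ => ∮ z in C(c, R), ((z - c) / w) ^ n • w⁻¹ • f z)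
      (-∮ z in C(c, R), (z - (c + w))⁻¹ • f z) := by
  have hw0 : 0 < ‖w‖ := hR.trans hw
  have hRw : R / ‖w‖ ∈ Ico (0 : ℝ) 1 := ⟨div_nonneg hR.le hw0.le, (div_lt_one hw0).2 hw⟩
  have hneg : -(∮ z in C(c, R), (z - (c + w))⁻¹ • f z) =
      ∮ z in C(c, R), -((z - (c + w))⁻¹ • f z) := by
    simp only [circleIntegral, smul_neg, intervalIntegral.integral_neg]
  rw [hneg]
  refine intervalIntegral.hasSum_integral_of_dominated_convergence
      (fun n θ => ‖f (circleMap c R θ)‖ * (R / ‖w‖) * (R / ‖w‖) ^ n)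
      (fun n => ?_) (fun n => ?_) ?_ ?_ ?_
  · simp only [deriv_circleMap]
    apply_rules [AEStronglyMeasurable.smul, hf.def'.1] <;> apply Measurable.aestronglyMeasurable
    all_goals fun_prop
  · refine Eventually.of_forall fun θ _ => le_of_eq ?_
    simp only [deriv_circleMap, circleMap_sub_center, div_pow, norm_smul, Complex.norm_mul,
      norm_circleMap_zero, abs_of_pos hR, norm_I, mul_one, Complex.norm_div, norm_pow, norm_inv]
    field_simp
  · exact Eventually.of_forall fun _ _ => (summable_geometric_of_lt_one hRw.1 hRw.2).mul_left _
  · simp only [mul_assoc, tsum_mul_left]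
    exact hf.norm.mul_const _
  · refine Eventually.of_forall fun θ _ => HasSum.const_smul _ ?_
    simp only [smul_smul, ← neg_smul]
    refine HasSum.smul_const ?_ _
    have : ‖(circleMap c R θ - c) / w‖ < 1 := by simpa [abs_of_pos hR] using hRw.2
    convert! (hasSum_geometric_of_norm_lt_one this).mul_right _ using 1
    rw [← mul_inv, sub_mul, one_mul, div_mul_cancel₀ _ (norm_pos_iff.1 hw0), ← inv_neg]
    ring

noncomputable def laurentCoeff (f : ℂ → E) (c : ℂ) (ρ : ℝ) (n : ℤ) : E :=
  (2 * π * I : ℂ)⁻¹ • ∮ z in C(c, ρ), (z - c) ^ (-n - 1) • f z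

theorem DifferentiableOn.laurentCoeff_eq_of_annulus {ρ₁ ρ₂ : ℝ} (h0 : 0 < ρ₁) (hle : ρ₁ ≤ ρ₂)
    (hf : DifferentiableOn ℂ f (closedBall c ρ₂ \ ball c ρ₁)) (n : ℤ) :
    laurentCoeff f c ρ₂ n = laurentCoeff f c ρ₁ n := by
  have hc : ∀ z ∈ closedBall c ρ₂ \ ball c ρ₁, z - c ≠ 0 := fun z hz h =>
    hz.2 (sub_eq_zero.1 h ▸ mem_ball_self h0)
  have hg : DifferentiableOn ℂ (fun z => (z - c) ^ (-n - 1) • f z) (closedBall c ρ₂ \ ball c ρ₁) :=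
    ((differentiableOn_id.sub_const c).zpow (Or.inl hc)).smul hf
  rw [laurentCoeff, laurentCoeff, hg.circleIntegral_eq_of_annulus h0 hle]

theorem hasSum_laurentCoeff_smul_of_norm_lt (hf : CircleIntegrable f c ρ) (hz : ‖z - c‖ < ρ) :
    HasSum (fun n : ℕ => (z - c) ^ (n : ℤ) • laurentCoeff f c ρ n)
      ((2 * π * I : ℂ)⁻¹ • ∮ ζ in C(c, ρ), (ζ - z)⁻¹ • f ζ) := by
  have := (hasSum_two_pi_I_cauchyPowerSeries_integral hf hz).const_smul (2 * π * I : ℂ)⁻¹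
  rw [add_sub_cancel] at this
  convert this using 2 with n
  rw [laurentCoeff, smul_comm, ← circleIntegral.integral_smul]
  congr 2 with ζ
  rw [smul_smul, smul_smul, div_pow_mul_inv, zpow_natCast]

theorem hasSum_laurentCoeff_smul_of_lt_norm (hf : CircleIntegrable f c ρ) (hρ : 0 < ρ)
    (hz : ρ < ‖z - c‖) :
    HasSum (fun n : ℕ => (z - c) ^ (-(n + 1) : ℤ) • laurentCoeff f c ρ (-(n + 1)))
      (-((2 * π * I : ℂ)⁻¹ • ∮ ζ in C(c, ρ), (ζ - z)⁻¹ • f ζ)) := by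
  have := (hasSum_circleIntegral_sub_inv_smul_of_lt_norm hf hρ hz).const_smul (2 * π * I : ℂ)⁻¹
  rw [add_sub_cancel, smul_neg] at this
  convert this using 2 with n
  rw [laurentCoeff, smul_comm, ← circleIntegral.integral_smul]
  congr 2 with ζ
  rw [smul_smul, smul_smul, div_pow_mul_inv, neg_neg, add_sub_cancel_right, zpow_natCast,
    neg_add', mul_comm]

variable [CompleteSpace E]

theorem DifferentiableOn.hasSum_laurentCoeff_smul_of_annulus {ρ₁ ρ₂ : ℝ} (h0 : 0 < ρ₁)
    (hz₁ : ρ₁ < ‖z - c‖) (hz₂ : ‖z - c‖ < ρ₂) (hρ₁ : ρ₁ ≤ ρ) (hρ₂ : ρ ≤ ρ₂)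
    (hf : DifferentiableOn ℂ f (closedBall c ρ₂ \ ball c ρ₁)) :
    HasSum (fun n : ℤ => (z - c) ^ n • laurentCoeff f c ρ n) (f z) := by
  have hle : ρ₁ ≤ ρ₂ := (hz₁.trans hz₂).le
  have hint : ∀ ρ', ρ₁ ≤ ρ' → ρ' ≤ ρ₂ → CircleIntegrable f c ρ' := fun ρ' h₁ h₂ =>
    (hf.continuousOn.mono (sphere_subset_closedBall_diff_ball h₁ h₂)).circleIntegrable
      (h0.le.trans h₁)
  have hf₂ : DifferentiableOn ℂ f (closedBall c ρ₂ \ ball c ρ) :=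
    hf.mono (sdiff_subset_sdiff_right (ball_subset_ball hρ₁))
  have hf₁ : DifferentiableOn ℂ f (closedBall c ρ \ ball c ρ₁) :=
    hf.mono (sdiff_subset_sdiff_left (closedBall_subset_closedBall hρ₂))
  have hcoeff₂ : laurentCoeff f c ρ₂ = laurentCoeff f c ρ :=
    funext (hf₂.laurentCoeff_eq_of_annulus (h0.trans_le hρ₁) hρ₂)
  have hcoeff₁ : laurentCoeff f c ρ₁ = laurentCoeff f c ρ :=
    (funext (hf₁.laurentCoeff_eq_of_annulus h0 hρ₁)).symm
  have hpos := hasSum_laurentCoeff_smul_of_norm_lt (hint ρ₂ hle le_rfl) hz₂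
  have hneg := hasSum_laurentCoeff_smul_of_lt_norm (hint ρ₁ le_rfl hle) h0 hz₁
  rw [hcoeff₂] at hpos
  rw [hcoeff₁] at hneg
  convert HasSum.of_nat_of_neg_add_one (f := fun n : ℤ => (z - c) ^ n • laurentCoeff f c ρ n)
    hpos hneg using 1
  rw [← sub_eq_add_neg, ← smul_sub, hf.circleIntegral_sub_inv_smul_sub_of_annulus h0 hz₁ hz₂,
    inv_smul_smul₀ two_pi_I_ne_zero]

end Laurent

/-- A function holomorphic on an annulus `{z : r < |z - a| < R}` (with `0 ≤ r < R ≤ ∞`)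
is represented there by a Laurent series `∑_{n ∈ ℤ} c n (z - a)^n`. -/
theorem laurent_expansion_on_annulus (a : ℂ) (r : ℝ) (R : ℝ≥0∞) (hr : 0 ≤ r)
    (hrR : (ENNReal.ofReal r) < R) (f : ℂ → ℂ)
    (hf : DifferentiableOn ℂ f {z : ℂ | r < ‖z - a‖ ∧ (ENNReal.ofReal ‖z - a‖) < R}) :
    ∃ c : ℤ → ℂ, ∀ z : ℂ, r < ‖z - a‖ → (ENNReal.ofReal ‖z - a‖) < R →
      HasSum (fun n : ℤ => c n * (z - a) ^ n) (f z) := by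
  obtain ⟨ρ₀, hrρ₀, hρ₀R⟩ := ENNReal.exists_lt_ofReal_lt hrR
  refine ⟨laurentCoeff f a ρ₀, fun z hz₁ hz₂ => ?_⟩
  obtain ⟨ρ₁, hrρ₁, hρ₁⟩ := exists_between (lt_min hz₁ hrρ₀)
  obtain ⟨ρ₂, hρ₂, hρ₂R⟩ := ENNReal.exists_lt_ofReal_lt (x := max ‖z - a‖ ρ₀)
    (by rw [ENNReal.ofReal_max]; exact max_lt hz₂ hρ₀R)
  have hsub : closedBall a ρ₂ \ ball a ρ₁ ⊆ {z : ℂ | r < ‖z - a‖ ∧ ENNReal.ofReal ‖z - a‖ < R} :=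
    fun w ⟨hw₂, hw₁⟩ => ⟨hrρ₁.trans_le (not_lt.1 (mt mem_ball_iff_norm.2 hw₁)),
      (ENNReal.ofReal_le_ofReal (mem_closedBall_iff_norm.1 hw₂)).trans_lt hρ₂R⟩
  simpa only [smul_eq_mul, mul_comm] using (hf.mono hsub).hasSum_laurentCoeff_smul_of_annulus
    (hr.trans_lt hrρ₁) (hρ₁.trans_le (min_le_left _ _)) ((le_max_left _ _).trans_lt hρ₂)
    ((hρ₁.trans_le (min_le_right _ _)).le) ((le_max_right _ _).trans hρ₂.le)
end

section
/- The function f(q) = Σ_{n ≥ 1} q^{n²}, holomorphic on the open unit disk, does not extend to a holomorphic function on any connected open set strictly containing the unit disk; i.e., the unit circle is a natural boundary for f. -/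
/-!
At a primitive root of unity `ζ` of order `b`, the coefficients `ζ ^ (n ^ 2)` are `b`-periodic
with mean `μ = G / b`, where `G = ∑ j < b, ζ ^ (j ^ 2)` is a quadratic Gauss sum; for odd `b`,
`|G| ^ 2 = b`, so `μ ≠ 0`. Abel summation against the decreasing weights `r ^ (n ^ 2)` gives
`f (r ζ) = μ ∑ r ^ (n ^ 2) + O(b)`, which is unbounded as `r → 1⁻`. A connected open set strictly
containing the disk meets the unit circle, and there the primitive roots of unity of odd order
are dense, so a holomorphic extension would have to stay bounded along a radius ending at one
of them.
-/

open Filter Topology Finset Metric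

section

variable {E : Type*} [SeminormedAddCommGroup E]

theorem norm_sum_range_le_of_periodic {d : ℕ → E} {b : ℕ} (hb : 0 < b)
    (hd : Function.Periodic d b) (hd0 : ∑ n ∈ range b, d n = 0) (N : ℕ) :
    ‖∑ n ∈ range N, d n‖ ≤ ∑ n ∈ range b, ‖d n‖ := by
  have hshift : ∀ q n, d (q * b + n) = d n := fun q n ↦ by rw [add_comm]; exact hd.nat_mul q n
  have hblocks : ∀ q, ∑ n ∈ range (q * b), d n = 0 := by
    intro q
    induction q with
    | zero => simp
    | succ q ih =>
      rw [add_one_mul, sum_range_add, ih, zero_add]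
      simpa only [hshift] using hd0
  rw [← Nat.div_add_mod' N b, sum_range_add, hblocks, zero_add]
  simp only [hshift]
  exact (norm_sum_le _ _).trans (sum_le_sum_of_subset_of_nonneg
    (range_mono (Nat.mod_lt N hb).le) fun _ _ _ ↦ norm_nonneg _)

variable [NormedSpace ℝ E]

theorem norm_sum_range_smul_le_of_antitone {c : ℕ → ℝ} {d : ℕ → E} {B : ℝ}
    (hc : Antitone c) (hc0 : ∀ n, 0 ≤ c n) (hB : ∀ N, ‖∑ n ∈ range N, d n‖ ≤ B) (N : ℕ) :
    ‖∑ n ∈ range N, c n • d n‖ ≤ c 0 * B := by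
  rw [sum_range_by_parts]
  calc _ ≤ ‖c (N - 1) • ∑ n ∈ range N, d n‖
        + ∑ i ∈ range (N - 1), ‖(c (i + 1) - c i) • ∑ n ∈ range (i + 1), d n‖ :=
        (norm_sub_le _ _).trans (by gcongr; exact norm_sum_le _ _)
    _ ≤ c (N - 1) * B + ∑ i ∈ range (N - 1), (c i - c (i + 1)) * B := by
        gcongr with i
        · rw [norm_smul, Real.norm_of_nonneg (hc0 _)]
          exact mul_le_mul_of_nonneg_left (hB N) (hc0 _)
        · rw [norm_smul, Real.norm_eq_abs, abs_sub_comm,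
            abs_of_nonneg (sub_nonneg.2 (hc (Nat.le_succ i)))]
          exact mul_le_mul_of_nonneg_left (hB _) (sub_nonneg.2 (hc (Nat.le_succ i)))
    _ = c 0 * B := by rw [← sum_mul, sum_range_sub']; ring

theorem norm_tsum_smul_le_of_antitone {c : ℕ → ℝ} {d : ℕ → E} {B : ℝ}
    (hc : Antitone c) (hc0 : ∀ n, 0 ≤ c n) (hB : ∀ N, ‖∑ n ∈ range N, d n‖ ≤ B)
    (hcd : Summable fun n ↦ c n • d n) : ‖∑' n, c n • d n‖ ≤ c 0 * B :=
  le_of_tendsto' hcd.hasSum.tendsto_sum_nat.norm (norm_sum_range_smul_le_of_antitone hc hc0 hB)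

end

theorem AddChar.sum_sq_mul_sum_neg_sq {R R' : Type*} [CommRing R] [Fintype R] [DecidableEq R]
    [CommRing R'] [IsDomain R'] {ψ : AddChar R R'} (hψ : ψ.IsPrimitive) (h2 : IsUnit (2 : R)) :
    (∑ x, ψ (x ^ 2)) * ∑ y, ψ (-y ^ 2) = Fintype.card R := by
  have hshift (y : R) : ∑ x, ψ (x ^ 2) * ψ (-y ^ 2) = ∑ d, ψ (d ^ 2) * ψ (y * (2 * d)) := by
    rw [← Equiv.sum_comp (Equiv.addLeft y)]
    refine sum_congr rfl fun d _ ↦ ?_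
    rw [← map_add_eq_mul, ← map_add_eq_mul, Equiv.coe_addLeft]
    ring_nf
  rw [sum_mul_sum, sum_comm, sum_congr rfl fun y _ ↦ hshift y, sum_comm]
  -- the inner sum `∑ y, ψ (y * (2 * d))` vanishes unless `2 * d = 0`, i.e. `d = 0`
  simp_rw [← mul_sum, AddChar.sum_mulShift _ hψ, h2.mul_right_eq_zero]
  simp

theorem IsPrimitiveRoot.sum_range_pow_sq_ne_zero {K : Type*} [CommRing K] [IsDomain K]
    [CharZero K] {ζ : K} {b : ℕ} (hζ : IsPrimitiveRoot ζ b) (hb : Odd b) :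
    ∑ j ∈ range b, ζ ^ (j ^ 2) ≠ 0 := by
  obtain ⟨k, rfl⟩ : ∃ k, b = k + 1 := ⟨b - 1, (Nat.sub_add_cancel hb.pos).symm⟩
  set ψ := AddChar.zmodChar (k + 1) hζ.pow_eq_one
  have h2 : IsUnit (2 : ZMod (k + 1)) := by
    simpa using (ZMod.isUnit_iff_coprime 2 (k + 1)).2 (Nat.coprime_two_left.2 hb)
  have hψ (x : ZMod (k + 1)) : ψ (x ^ 2) = ζ ^ (x.val ^ 2) := by
    rw [← AddChar.zmodChar_apply' hζ.pow_eq_one]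
    push_cast
    rw [ZMod.natCast_val, ZMod.cast_id]
  have hG : ∑ x, ψ (x ^ 2) = ∑ j ∈ range (k + 1), ζ ^ (j ^ 2) := by
    simp_rw [hψ]
    exact Fin.sum_univ_eq_sum_range (fun j ↦ ζ ^ (j ^ 2)) (k + 1)
  intro h
  have := AddChar.sum_sq_mul_sum_neg_sq (AddChar.zmodChar_primitive_of_primitive_root _ hζ) h2
  rw [hG, h, zero_mul, ZMod.card] at this
  exact (Nat.cast_ne_zero.2 (Nat.succ_ne_zero k)) this.symm

theorem summable_pow_sq {R : Type*} [NormedRing R] [CompleteSpace R] {q : R} (hq : ‖q‖ < 1) :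
    Summable fun n : ℕ ↦ q ^ (n ^ 2) :=
  (summable_geometric_of_norm_lt_one hq).comp_injective (Nat.pow_left_injective two_ne_zero)

theorem tendsto_tsum_pow_sq_nhdsLT_one :
    Tendsto (fun r : ℝ ↦ ∑' n : ℕ, r ^ (n ^ 2)) (𝓝[<] 1) atTop := by
  refine tendsto_atTop.2 fun M ↦ ?_
  obtain ⟨N, hN⟩ := exists_nat_gt M
  have hpartial : Tendsto (fun r : ℝ ↦ ∑ n ∈ range N, r ^ (n ^ 2)) (𝓝[<] 1) (𝓝 N) := by
    have := (continuous_finsetSum (range N) fun n _ ↦ continuous_pow (n ^ 2)).tendsto (1 : ℝ)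
    simpa using this.mono_left nhdsWithin_le_nhds
  filter_upwards [hpartial.eventually_const_lt hN, Ioo_mem_nhdsLT zero_lt_one] with r hr hr01
  have hq : ‖r‖ < 1 := by rw [Real.norm_of_nonneg hr01.1.le]; exact hr01.2
  exact hr.le.trans
    (Summable.sum_le_tsum _ (fun n _ ↦ pow_nonneg hr01.1.le _) (summable_pow_sq hq))

theorem tendsto_norm_tsum_mul_pow_sq_nhdsLT_one {ζ : ℂ} {b : ℕ} (hb : 0 < b) (hζ : ζ ^ b = 1)
    (hG : ∑ j ∈ range b, ζ ^ (j ^ 2) ≠ 0) :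
    Tendsto (fun r : ℝ ↦ ‖∑' n : ℕ, ((r : ℂ) * ζ) ^ (n ^ 2)‖) (𝓝[<] 1) atTop := by
  set μ : ℂ := (b : ℂ)⁻¹ * ∑ j ∈ range b, ζ ^ (j ^ 2)
  set d : ℕ → ℂ := fun n ↦ ζ ^ (n ^ 2) - μ
  have hd : Function.Periodic d b := fun n ↦ by
    simp only [d, show (n + b) ^ 2 = n ^ 2 + b * (2 * n + b) by ring, pow_add, pow_mul, hζ,
      one_pow, mul_one]
  have hd0 : ∑ n ∈ range b, d n = 0 := by
    have hb' : (b : ℂ) ≠ 0 := Nat.cast_ne_zero.2 hb.ne'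
    simp only [d, μ, sum_sub_distrib, sum_const, card_range, nsmul_eq_mul]
    field_simp
    ring
  have hbound : ∀ r ∈ Set.Ioo (0 : ℝ) 1,
      ‖μ‖ * ∑' n : ℕ, r ^ (n ^ 2) - ∑ n ∈ range b, ‖d n‖ ≤ ‖∑' n : ℕ, ((r : ℂ) * ζ) ^ (n ^ 2)‖ := by
    rintro r ⟨hr0, hr1⟩
    have hζ1 : ‖ζ‖ = 1 := Complex.norm_eq_one_of_pow_eq_one hζ hb.ne'
    have hr : ‖r‖ < 1 := by rwa [Real.norm_of_nonneg hr0.le]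
    have hrζ : ‖(r : ℂ) * ζ‖ < 1 := by rwa [norm_mul, hζ1, mul_one, Complex.norm_real]
    have hterm (n : ℕ) : ((r : ℂ) * ζ) ^ (n ^ 2) = r ^ (n ^ 2) • ζ ^ (n ^ 2) := by
      rw [mul_pow, Complex.real_smul, Complex.ofReal_pow]
    have hμ := (summable_pow_sq hr).smul_const (a := μ)
    have hdsum : Summable fun n : ℕ ↦ r ^ (n ^ 2) • d n := by
      simpa only [d, smul_sub, ← hterm] using (summable_pow_sq hrζ).sub hμ
    have hsplit : ∑' n : ℕ, ((r : ℂ) * ζ) ^ (n ^ 2)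
        = ∑' n : ℕ, r ^ (n ^ 2) • d n + (∑' n : ℕ, r ^ (n ^ 2)) • μ := by
      rw [← (summable_pow_sq hr).tsum_smul_const, ← hdsum.tsum_add hμ]
      exact tsum_congr fun n ↦ by rw [hterm, ← smul_add, sub_add_cancel]
    have hsmall : ‖∑' n : ℕ, r ^ (n ^ 2) • d n‖ ≤ ∑ n ∈ range b, ‖d n‖ := by
      have hanti : Antitone fun n : ℕ ↦ r ^ (n ^ 2) := fun m n hmn ↦
        pow_le_pow_of_le_one hr0.le hr1.le (Nat.pow_le_pow_left hmn 2)
      simpa using norm_tsum_smul_le_of_antitone hanti (fun n ↦ by positivity)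
        (norm_sum_range_le_of_periodic hb hd hd0) hdsum
    have hmain : ‖(∑' n : ℕ, r ^ (n ^ 2)) • μ‖ = ‖μ‖ * ∑' n : ℕ, r ^ (n ^ 2) := by
      rw [norm_smul, Real.norm_of_nonneg (tsum_nonneg fun n ↦ by positivity), mul_comm]
    rw [hsplit, ← hmain]
    linarith [norm_le_add_norm_add' (∑' n : ℕ, r ^ (n ^ 2) • d n) ((∑' n : ℕ, r ^ (n ^ 2)) • μ)]
  refine tendsto_atTop_mono' _ (eventually_of_mem (Ioo_mem_nhdsLT zero_lt_one) hbound) ?_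
  refine tendsto_atTop_add_const_right _ _ (tendsto_tsum_pow_sq_nhdsLT_one.const_mul_atTop ?_)
  exact norm_pos_iff.2 (mul_ne_zero (inv_ne_zero (Nat.cast_ne_zero.2 hb.ne')) hG)

theorem IsPreconnected.inter_sphere_nonempty {α : Type*} [PseudoMetricSpace α] {U : Set α}
    (hU : IsPreconnected U) {x : α} {r : ℝ} (hr : 0 < r) (hxU : ball x r ⊂ U) :
    (U ∩ sphere x r).Nonempty := by
  by_contra hempty
  refine hxU.not_subset (hU.subset_of_closure_inter_subset isOpen_ball
    ⟨x, hxU.subset (mem_ball_self hr), mem_ball_self hr⟩ ?_)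
  rintro z ⟨hz, hzU⟩
  refine lt_of_le_of_ne (closure_ball_subset_closedBall hz) fun hzx ↦ hempty ⟨z, hzU, hzx⟩

open Complex Real in
theorem sphere_subset_closure_setOf_isPrimitiveRoot_odd :
    sphere (0 : ℂ) 1 ⊆ closure {ζ : ℂ | ∃ b, Odd b ∧ IsPrimitiveRoot ζ b} := by
  intro z hz
  -- one extra turn makes `y ≥ 0`, so that `⌊y * 3 ^ k⌋₊` approximates `y * 3 ^ k`
  set y : ℝ := arg z / (2 * π) + 1
  have hy : 0 ≤ y := by
    have : -1 ≤ arg z / (2 * π) := by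
      rw [le_div_iff₀ (by positivity)]
      linarith [neg_pi_lt_arg z, pi_pos]
    linarith
  have hzy : exp (2 * π * I * y) = z := by
    have : (2 * π * I * y : ℂ) = arg z * I + 2 * π * I := by
      simp only [y]
      push_cast
      field_simp
    rw [this, Complex.exp_add, exp_two_pi_mul_I, mul_one]
    simpa [mem_sphere_zero_iff_norm.1 hz] using norm_mul_exp_arg_mul_I z
  -- the numerator `3 p + 1` is prime to `3` and moves `p / 3 ^ k` by only `3 ^ (-k-1)`
  set m : ℕ → ℕ := fun k ↦ 3 * ⌊y * 3 ^ k⌋₊ + 1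
  set x : ℕ → ℝ := fun k ↦ (m k : ℝ) / 3 ^ (k + 1)
  have hprim (k : ℕ) : IsPrimitiveRoot (exp (2 * π * I * x k)) (3 ^ (k + 1)) := by
    have := isPrimitiveRoot_exp_of_coprime (m k) (3 ^ (k + 1)) (by positivity) ?_
    · convert this using 3
      simp only [x]
      push_cast
      ring
    · exact Nat.Coprime.pow_right _ (by simp [m])
  have hlim : Tendsto x atTop (𝓝 y) := by
    have hfloor := (tendsto_nat_floor_mul_div_atTop hy).comp
      (tendsto_pow_atTop_atTop_of_one_lt (by norm_num : (1 : ℝ) < 3))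
    have hsmall := (tendsto_pow_atTop_nhds_zero_of_lt_one (by norm_num : (0 : ℝ) ≤ 1 / 3)
      (by norm_num)).const_mul (1 / 3)
    rw [← add_zero y, ← mul_zero (1 / 3 : ℝ)]
    refine (hfloor.add hsmall).congr fun k ↦ ?_
    simp only [x, m, Function.comp_apply, one_div, inv_pow]
    push_cast
    field_simp
    ring
  refine mem_closure_of_tendsto (f := fun k ↦ exp (2 * π * I * x k)) (b := atTop) ?_
    (Eventually.of_forall fun k ↦ ⟨_, Odd.pow (by decide), hprim k⟩)
  rw [← hzy]
  exact ((continuous_ofReal.const_mul _).cexp.tendsto y).comp hlim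

/-- The function `f(q) = ∑_{n ≥ 1} q^(n²)`, holomorphic on the open unit disk, has the
unit circle as a natural boundary: it extends holomorphically to no connected open set
strictly containing the unit disk. -/
theorem lacunary_natural_boundary :
    ¬ ∃ (U : Set ℂ) (g : ℂ → ℂ), IsOpen U ∧ IsConnected U ∧ Metric.ball (0 : ℂ) 1 ⊂ U ∧
      DifferentiableOn ℂ g U ∧
      Set.EqOn g (fun q => ∑' n : ℕ, q ^ ((n + 1) ^ 2)) (Metric.ball (0 : ℂ) 1) := by
  rintro ⟨U, g, hUo, hUc, hDU, hg, hgf⟩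
  obtain ⟨z, hzU, hz⟩ := hUc.isPreconnected.inter_sphere_nonempty one_pos hDU
  obtain ⟨ζ, hζU, b, hb, hζ⟩ :=
    mem_closure_iff.1 (sphere_subset_closure_setOf_isPrimitiveRoot_odd hz) U hUo hzU
  have hζ1 : ‖ζ‖ = 1 := hζ.norm'_eq_one hb.pos.ne'
  have hcont : Tendsto (fun r : ℝ ↦ ‖g (r * ζ)‖) (𝓝[<] 1) (𝓝 ‖g ζ‖) := by
    have hray : Tendsto (fun r : ℝ ↦ (r : ℂ) * ζ) (𝓝[<] 1) (𝓝 ζ) :=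
      ((by fun_prop : Continuous fun r : ℝ ↦ (r : ℂ) * ζ).tendsto' 1 ζ (by simp)).mono_left
        nhdsWithin_le_nhds
    exact ((hg.continuousOn.continuousAt (hUo.mem_nhds hζU)).tendsto.comp hray).norm
  have hblowup : Tendsto (fun r : ℝ ↦ ‖g (r * ζ)‖) (𝓝[<] 1) atTop := by
    refine tendsto_atTop_mono' _ ?_ (tendsto_atTop_add_const_right _ (-1)
      (tendsto_norm_tsum_mul_pow_sq_nhdsLT_one hb.pos hζ.pow_eq_one
        (hζ.sum_range_pow_sq_ne_zero hb)))
    filter_upwards [Ioo_mem_nhdsLT zero_lt_one] with r ⟨hr0, hr1⟩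
    have hq : ‖(r : ℂ) * ζ‖ < 1 := by
      rwa [norm_mul, hζ1, mul_one, Complex.norm_real, Real.norm_of_nonneg hr0.le]
    rw [hgf (mem_ball_zero_iff.2 hq), (summable_pow_sq hq).tsum_eq_zero_add]
    have := norm_add_le (1 : ℂ) (∑' n : ℕ, ((r : ℂ) * ζ) ^ ((n + 1) ^ 2))
    simp only [zero_pow two_ne_zero, pow_zero, norm_one] at this ⊢
    linarith
  exact not_tendsto_atTop_of_tendsto_nhds hcont hblowup
end

section
/- The Weierstrass function f(x) = Σ_{n ≥ 0} b^n cos(a^n π x), where a is an odd integer greater than 1, 0 < b < 1, and ab > 1 + 3π/2, is continuous on ℝ but differentiable at no point of ℝ. -/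
/-!
Split `f = ∑_{n<m} bⁿ cos(aⁿπ ·) + bᵐ f(aᵐ ·)`. The head is Lipschitz with constant
`π ∑_{n<m} (ab)ⁿ ≤ π (ab)ᵐ / (ab - 1)`. Since `a` is odd, `f(t + j) = (-1)ʲ f(t)` for integers `j`,
so if `j` is the integer nearest to `aᵐx` and `aᵐy = j - 1`, the tail difference is
`± bᵐ (f(0) + f(aᵐx - j))`, of absolute value at least `bᵐ`, while `0 < x - y ≤ 3 / (2aᵐ)`.
Hence the difference quotient of `f` at `x, y` is at least `(ab)ᵐ (2/3 - π / (ab - 1))`, which tends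
to infinity because `ab > 1 + 3π/2`.
-/

open Real Filter Topology Finset

theorem not_differentiableAt_of_tendsto_abs_slope {f : ℝ → ℝ} {x : ℝ} {y : ℕ → ℝ}
    (hy : Tendsto y atTop (𝓝[≠] x)) (hslope : Tendsto (fun m => |slope f x (y m)|) atTop atTop) :
    ¬ DifferentiableAt ℝ f x := fun hf =>
  not_tendsto_nhds_of_tendsto_atTop hslope _
    ((hasDerivAt_iff_tendsto_slope.1 hf.hasDerivAt).comp hy).abs

theorem cos_mul_pi_mul_add_int {c : ℤ} (hc : Odd c) (t : ℝ) (j : ℤ) :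
    cos (c * π * (t + j)) = (-1) ^ j * cos (c * π * t) := by
  have hsign : ((-1 : ℝ)) ^ (c * j) = (-1) ^ j := by
    rcases Int.even_or_odd j with hj | hj
    · rw [(hj.mul_left c).neg_one_zpow, hj.neg_one_zpow]
    · rw [(hc.mul hj).neg_one_zpow, hj.neg_one_zpow]
  rw [← hsign, ← cos_add_int_mul_pi]
  push_cast
  ring_nf

theorem geom_sum_le_pow_div_sub_one {r : ℝ} (hr : 1 < r) (m : ℕ) :
    ∑ n ∈ range m, r ^ n ≤ r ^ m / (r - 1) := by
  rw [geom_sum_eq hr.ne']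
  exact div_le_div_of_nonneg_right (by linarith) (by linarith)

theorem norm_pow_mul_cos_le (b : ℝ) (n : ℕ) (θ : ℝ) : ‖b ^ n * cos θ‖ ≤ |b| ^ n := by
  rw [norm_mul, norm_pow, Real.norm_eq_abs]
  exact mul_le_of_le_one_right (by positivity) (abs_cos_le_one θ)

theorem summable_pow_mul_cos {b : ℝ} (hb : |b| < 1) (θ : ℕ → ℝ) :
    Summable fun n => b ^ n * cos (θ n) :=
  .of_norm_bounded (summable_geometric_of_lt_one (abs_nonneg b) hb)
    fun n => norm_pow_mul_cos_le b n (θ n)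

noncomputable def weierstrass (a b x : ℝ) : ℝ := ∑' n : ℕ, b ^ n * cos (a ^ n * π * x)

section

variable {a b : ℝ}

theorem continuous_weierstrass (hb : |b| < 1) : Continuous (weierstrass a b) :=
  continuous_tsum (fun n => by fun_prop) (summable_geometric_of_lt_one (abs_nonneg b) hb)
    fun n _ => norm_pow_mul_cos_le b n _

theorem weierstrass_eq_sum_range_add (hb : |b| < 1) (m : ℕ) (x : ℝ) :
    weierstrass a b x = ∑ n ∈ range m, b ^ n * cos (a ^ n * π * x)
      + b ^ m * weierstrass a b (a ^ m * x) := by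
  rw [weierstrass, ← (summable_pow_mul_cos hb _).sum_add_tsum_nat_add m, weierstrass,
    ← tsum_mul_left]
  congr 1
  refine tsum_congr fun k => ?_
  rw [pow_add, pow_add]
  ring_nf

theorem abs_sum_range_pow_mul_cos_sub_le (ha : 0 ≤ a) (hb : 0 ≤ b) (m : ℕ) (x y : ℝ) :
    |∑ n ∈ range m, b ^ n * cos (a ^ n * π * y) - ∑ n ∈ range m, b ^ n * cos (a ^ n * π * x)|
      ≤ π * |y - x| * ∑ n ∈ range m, (a * b) ^ n := by
  rw [← sum_sub_distrib, mul_sum]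
  refine (abs_sum_le_sum_abs _ _).trans (sum_le_sum fun n _ => ?_)
  calc |b ^ n * cos (a ^ n * π * y) - b ^ n * cos (a ^ n * π * x)|
      = b ^ n * |cos (a ^ n * π * y) - cos (a ^ n * π * x)| := by
        rw [← mul_sub, abs_mul, abs_of_nonneg (by positivity)]
    _ ≤ b ^ n * |a ^ n * π * y - a ^ n * π * x| :=
        mul_le_mul_of_nonneg_left (abs_cos_sub_cos_le _ _) (by positivity)
    _ = π * |y - x| * (a * b) ^ n := by
        rw [← mul_sub, abs_mul, abs_of_nonneg (by positivity), mul_pow]; ring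

theorem weierstrass_add_int {a : ℕ} (ha : Odd a) (t : ℝ) (j : ℤ) :
    weierstrass a b (t + j) = (-1) ^ j * weierstrass a b t := by
  rw [weierstrass, weierstrass, ← tsum_mul_left]
  refine tsum_congr fun n => ?_
  have := cos_mul_pi_mul_add_int (c := a ^ n) (by exact_mod_cast ha.pow) t j
  push_cast at this
  rw [this]; ring

theorem one_le_weierstrass_zero_add (hb0 : 0 ≤ b) (hb1 : b < 1) {t : ℝ} (ht : |t| ≤ 1 / 2) :
    1 ≤ weierstrass a b 0 + weierstrass a b t := by
  have hb : |b| < 1 := by rwa [abs_of_nonneg hb0]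
  rw [weierstrass, weierstrass, ← (summable_pow_mul_cos hb _).tsum_add (summable_pow_mul_cos hb _)]
  have hterm : ∀ n : ℕ, 0 ≤ b ^ n * cos (a ^ n * π * 0) + b ^ n * cos (a ^ n * π * t) := by
    intro n
    rw [mul_zero, cos_zero, mul_one, ← mul_one_add]
    exact mul_nonneg (by positivity) (by linarith [neg_one_le_cos (a ^ n * π * t)])
  have hcos : 0 ≤ cos (π * t) := by
    apply cos_nonneg_of_neg_pi_div_two_le_of_le <;>
      nlinarith [abs_le.1 ht, pi_pos]
  calc (1 : ℝ) ≤ b ^ 0 * cos (a ^ 0 * π * 0) + b ^ 0 * cos (a ^ 0 * π * t) := by simpa using hcos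
    _ ≤ _ := ((summable_pow_mul_cos hb _).add (summable_pow_mul_cos hb _)).le_tsum 0
        fun n _ => hterm n

theorem one_le_abs_weierstrass_sub {a : ℕ} (ha : Odd a) (hb0 : 0 ≤ b) (hb1 : b < 1) (j : ℤ)
    {t : ℝ} (ht : |t| ≤ 1 / 2) :
    1 ≤ |weierstrass a b (j - 1) - weierstrass a b (j + t)| := by
  have hleft : weierstrass a b (j - 1) = -(-1) ^ j * weierstrass a b 0 := by
    have h := weierstrass_add_int (b := b) ha 0 (j - 1)
    rw [zpow_sub₀ (by norm_num), zpow_one] at h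
    push_cast at h
    rw [zero_add] at h
    rw [h]; ring
  have hright : weierstrass a b (j + t) = (-1) ^ j * weierstrass a b t := by
    rw [add_comm, weierstrass_add_int ha]
  have hdiff : weierstrass a b (j - 1) - weierstrass a b (j + t) =
      -(-1) ^ j * (weierstrass a b 0 + weierstrass a b t) := by
    rw [hleft, hright]; ring
  rw [hdiff, abs_mul, abs_neg, abs_neg_one_zpow, one_mul]
  exact (one_le_weierstrass_zero_add hb0 hb1 ht).trans (le_abs_self _)

end

noncomputable def slopeWitness (a x : ℝ) (m : ℕ) : ℝ := (round (a ^ m * x) - 1) / a ^ m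

section

variable {a x : ℝ}

theorem sub_slopeWitness_mem_Ioc (ha : 0 < a) (m : ℕ) :
    x - slopeWitness a x m ∈ Set.Ioc 0 (3 / 2 / a ^ m) := by
  have hround := abs_le.1 (abs_sub_round (a ^ m * x))
  have hdist : x - slopeWitness a x m = (1 + (a ^ m * x - round (a ^ m * x))) / a ^ m := by
    rw [slopeWitness]; field_simp; ring
  rw [hdist]
  constructor
  · exact div_pos (by linarith) (by positivity)
  · gcongr; linarith

theorem tendsto_slopeWitness (ha : 1 < a) : Tendsto (slopeWitness a x) atTop (𝓝[≠] x) := by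
  have hmem := fun m => sub_slopeWitness_mem_Ioc (x := x) (zero_lt_one.trans ha) m
  have hbound : Tendsto (fun m : ℕ => 3 / 2 / a ^ m) atTop (𝓝 0) :=
    tendsto_const_nhds.div_atTop (tendsto_pow_atTop_atTop_of_one_lt ha)
  refine tendsto_nhdsWithin_iff.2 ⟨?_, .of_forall fun m => (sub_pos.1 (hmem m).1).ne⟩
  rw [tendsto_iff_dist_tendsto_zero]
  refine squeeze_zero (fun _ => dist_nonneg) (fun m => ?_) hbound
  rw [dist_comm, dist_eq_norm, Real.norm_eq_abs, abs_of_pos (hmem m).1]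
  exact (hmem m).2

end

theorem abs_slope_weierstrass_slopeWitness_ge {a : ℕ} {b : ℝ} (ha : Odd a) (hb0 : 0 ≤ b)
    (hb1 : b < 1) (hab : 1 < a * b) (x : ℝ) (m : ℕ) :
    (a * b) ^ m * (2 / 3 - π / (a * b - 1)) ≤
      |slope (weierstrass a b) x (slopeWitness a x m)| := by
  have ha0 : (0 : ℝ) < a := by exact_mod_cast ha.pos
  have hb : |b| < 1 := by rwa [abs_of_nonneg hb0]
  set y := slopeWitness a x m
  set j := round ((a : ℝ) ^ m * x)
  obtain ⟨hd, hd'⟩ := sub_slopeWitness_mem_Ioc (x := x) ha0 m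
  have hy : (a : ℝ) ^ m * y = j - 1 := by simp only [y, j, slopeWitness]; field_simp
  have hhead := (abs_sum_range_pow_mul_cos_sub_le ha0.le hb0 m x y).trans
    (mul_le_mul_of_nonneg_left (geom_sum_le_pow_div_sub_one hab m) (by positivity))
  have hyx : |y - x| = x - y := by rw [abs_sub_comm, abs_of_pos hd]
  rw [hyx] at hhead
  set H := ∑ n ∈ range m, b ^ n * cos (a ^ n * π * y) - ∑ n ∈ range m, b ^ n * cos (a ^ n * π * x)
  set T := weierstrass a b (j - 1) - weierstrass a b (a ^ m * x)
  have hround : |(a : ℝ) ^ m * x - j| ≤ 1 / 2 := abs_sub_round _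
  have htail : 1 ≤ |T| := by
    simpa only [add_sub_cancel] using one_le_abs_weierstrass_sub ha hb0 hb1 j hround
  have hsplit : weierstrass a b y - weierstrass a b x = H + b ^ m * T := by
    rw [weierstrass_eq_sum_range_add hb m y, weierstrass_eq_sum_range_add hb m x, hy]
    ring
  have hdiff : b ^ m - π * (x - y) * ((a * b) ^ m / (a * b - 1)) ≤
      |weierstrass a b y - weierstrass a b x| := by
    have hrev : |b ^ m * T| ≤ |H + b ^ m * T| + |H| := by simpa using abs_sub (H + b ^ m * T) H
    rw [abs_mul, abs_of_nonneg (by positivity)] at hrev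
    rw [hsplit]
    nlinarith [pow_nonneg hb0 m]
  have hscale : (a : ℝ) ^ m * (x - y) ≤ 3 / 2 := by
    rwa [le_div_iff₀ (by positivity), mul_comm] at hd'
  rw [slope_def_field, abs_div, hyx, le_div_iff₀ hd]
  calc (a * b) ^ m * (2 / 3 - π / (a * b - 1)) * (x - y)
      = 2 / 3 * b ^ m * ((a : ℝ) ^ m * (x - y)) - π * (x - y) * ((a * b) ^ m / (a * b - 1)) := by
        rw [mul_pow]; ring
    _ ≤ b ^ m - π * (x - y) * ((a * b) ^ m / (a * b - 1)) := by
        nlinarith [pow_nonneg hb0 m]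
    _ ≤ _ := hdiff

theorem tendsto_abs_slope_weierstrass_slopeWitness {a : ℕ} {b : ℝ} (ha : Odd a) (hb0 : 0 ≤ b)
    (hb1 : b < 1) (hab : 1 + 3 * π / 2 < a * b) (x : ℝ) :
    Tendsto (fun m => |slope (weierstrass a b) x (slopeWitness a x m)|) atTop atTop := by
  have hab1 : 1 < (a : ℝ) * b := by linarith [pi_pos]
  have hcoeff : 0 < 2 / 3 - π / (a * b - 1) := by
    rw [sub_pos, div_lt_iff₀ (by linarith)]
    linarith
  exact tendsto_atTop_mono (abs_slope_weierstrass_slopeWitness_ge ha hb0 hb1 hab1 x)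
    ((tendsto_pow_atTop_atTop_of_one_lt hab1).atTop_mul_const hcoeff)

/-- The Weierstrass function `f(x) = ∑_{n ≥ 0} bⁿ cos(aⁿ π x)`, with `a` an odd integer
`> 1`, `0 < b < 1` and `ab > 1 + 3π/2`, is continuous on `ℝ` but nowhere differentiable. -/
theorem weierstrass_nowhere_differentiable (a : ℕ) (b : ℝ)
    (ha_odd : Odd a) (ha : 1 < a) (hb0 : 0 < b) (hb1 : b < 1)
    (hab : 1 + 3 * Real.pi / 2 < (a : ℝ) * b) :
    Continuous (fun x : ℝ => ∑' n : ℕ, b ^ n * Real.cos ((a : ℝ) ^ n * Real.pi * x)) ∧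
      ∀ x : ℝ, ¬ DifferentiableAt ℝ
        (fun x : ℝ => ∑' n : ℕ, b ^ n * Real.cos ((a : ℝ) ^ n * Real.pi * x)) x := by
  refine ⟨continuous_weierstrass (by rwa [abs_of_pos hb0]), fun x => ?_⟩
  exact not_differentiableAt_of_tendsto_abs_slope (tendsto_slopeWitness (by exact_mod_cast ha))
    (tendsto_abs_slope_weierstrass_slopeWitness ha_odd hb0.le hb1 hab x)
end

section
/- Every function meromorphic on all of ℂ can be written as the quotient of two entire functions. -/
/-!
Let `S` be the set of points where `f` fails to be analytic. It is closed and discrete, and at each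
`s ∈ S` some power `(z - s) ^ d s` makes `f` analytic. A Weierstrass product `h` vanishing to order
at least `d s` at every `s ∈ S`, and nowhere else, is entire; then `h • f` has only removable
singularities, so its meromorphic normal form `g` is entire and agrees with `h * f` off `S`.

The product is `∏ E_{m_s} (z / s) ^ d s`, with `E_m (w) = (1 - w) exp (w + ⋯ + w ^ m / m)`. On the
disc `|z| < R` all factors with `|s| ≥ 2R` are exponentials of logarithms bounded by
`d s * 2 ^ (-m_s)`; choosing `m_s` so that these bounds are summable, the product is locally a
finite product times the exponential of a locally uniformly convergent series.
-/

open Complex Filter Set Metric Topology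

lemma differentiable_logTaylor (n : ℕ) : Differentiable ℂ (logTaylor n) := by
  unfold logTaylor; fun_prop

lemma norm_div_lt_half {𝕜 : Type*} [NormedDivisionRing 𝕜] {z a : 𝕜} (hz : 2 * ‖z‖ < ‖a‖) :
    ‖z / a‖ < 1 / 2 := by
  rw [norm_div, div_lt_iff₀ (by linarith [norm_nonneg z])]
  linarith

lemma natCast_mul_half_pow_le_one (n : ℕ) : (n : ℝ) * (1 / 2) ^ n ≤ 1 := by
  rw [one_div, inv_pow, ← div_eq_mul_inv, div_le_one (by positivity)]
  exact_mod_cast Nat.lt_two_pow_self.le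

lemma countable_of_tendsto_cofinite_cocompact {ι X : Type*} [TopologicalSpace X]
    [SigmaCompactSpace X] {a : ι → X} (ha : Tendsto a cofinite (cocompact X)) : Countable ι := by
  have hfin (n : ℕ) := tendsto_cofinite_cocompact_iff.mp ha _ (isCompact_compactCovering X n)
  have hcover : (univ : Set ι) = ⋃ n, a ⁻¹' compactCovering X n := by
    rw [← preimage_iUnion, iUnion_compactCovering, preimage_univ]
  exact countable_univ_iff.mp (hcover ▸ countable_iUnion fun n ↦ (hfin n).countable)

lemma exists_finset_forall_notMem_lt_norm {ι E : Type*} [NormedAddCommGroup E] [ProperSpace E]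
    {a : ι → E} (ha : Tendsto a cofinite (cocompact E)) (r : ℝ) :
    ∃ T : Finset ι, ∀ i ∉ T, r < ‖a i‖ := by
  have hfin := tendsto_cofinite_cocompact_iff.mp ha _ (isCompact_closedBall (0 : E) r)
  exact ⟨hfin.toFinset, fun i hi ↦ by simpa using hi⟩

/- `weierstrassFactor a d m z = E_m (z / a) ^ d` (and `z ^ d` for `a = 0`), since
`logTaylor (m + 1) (-w) = -(w + ⋯ + w ^ m / m)` and `1 - z / a = (z - a) * (-a)⁻¹`; it is written as
`(z - a) ^ d` times a nowhere vanishing entire function. -/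
noncomputable def weierstrassUnit (a : ℂ) (d m : ℕ) (z : ℂ) : ℂ :=
  if a = 0 then 1 else ((-a)⁻¹ * exp (-logTaylor (m + 1) (-(z / a)))) ^ d

noncomputable def weierstrassFactor (a : ℂ) (d m : ℕ) (z : ℂ) : ℂ :=
  (z - a) ^ d * weierstrassUnit a d m z

noncomputable def logWeierstrassFactor (a : ℂ) (d m : ℕ) (z : ℂ) : ℂ :=
  d * (log (1 + -(z / a)) - logTaylor (m + 1) (-(z / a)))

noncomputable def weierstrassProduct {ι : Type*} (a : ι → ℂ) (d m : ι → ℕ) (z : ℂ) : ℂ :=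
  ∏' i, weierstrassFactor (a i) (d i) (m i) z

section ElementaryFactor

variable {a z : ℂ} {d m : ℕ}

lemma weierstrassUnit_ne_zero : weierstrassUnit a d m z ≠ 0 := by
  unfold weierstrassUnit
  split_ifs with ha
  · exact one_ne_zero
  · exact pow_ne_zero _ (mul_ne_zero (by simpa using ha) (exp_ne_zero _))

lemma differentiable_weierstrassUnit : Differentiable ℂ (weierstrassUnit a d m) := by
  unfold weierstrassUnit
  split_ifs
  · exact differentiable_const _
  · have := differentiable_logTaylor (m + 1)
    fun_prop

lemma differentiable_weierstrassFactor : Differentiable ℂ (weierstrassFactor a d m) := by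
  have := differentiable_weierstrassUnit (a := a) (d := d) (m := m)
  unfold weierstrassFactor
  fun_prop

lemma weierstrassFactor_ne_zero (hz : z ≠ a) : weierstrassFactor a d m z ≠ 0 :=
  mul_ne_zero (pow_ne_zero _ (sub_ne_zero.mpr hz)) weierstrassUnit_ne_zero

lemma weierstrassFactor_eq_exp_log (hz : 2 * ‖z‖ < ‖a‖) :
    weierstrassFactor a d m z = exp (logWeierstrassFactor a d m z) := by
  have ha : a ≠ 0 := norm_pos_iff.mp (by linarith [norm_nonneg z])
  have h₁ : (z - a) * (-a)⁻¹ = 1 + -(z / a) := by field_simp; ring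
  have h₂ : 1 + -(z / a) ≠ 0 := by
    rw [← h₁]
    refine mul_ne_zero (sub_ne_zero.mpr ?_) (by simpa using ha)
    rintro rfl
    linarith [norm_nonneg z]
  rw [weierstrassFactor, weierstrassUnit, if_neg ha, mul_pow, ← mul_assoc, ← mul_pow, h₁,
    logWeierstrassFactor, mul_sub, exp_sub, exp_nat_mul, exp_nat_mul, exp_log h₂, exp_neg]
  ring

lemma norm_logWeierstrassFactor_le (hz : 2 * ‖z‖ < ‖a‖) :
    ‖logWeierstrassFactor a d m z‖ ≤ d * (1 / 2) ^ m := by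
  have hza := norm_div_lt_half hz
  have hw : ‖-(z / a)‖ < 1 := by rw [norm_neg]; linarith
  have hTaylor : ‖log (1 + -(z / a)) - logTaylor (m + 1) (-(z / a))‖ ≤ (1 / 2) ^ m :=
    calc _ ≤ ‖z / a‖ ^ (m + 1) * (1 - ‖z / a‖)⁻¹ / (m + 1) := by
          simpa only [norm_neg] using norm_log_sub_logTaylor_le m hw
      _ ≤ (1 / 2) ^ (m + 1) * 2 / 1 := by
          gcongr
          · exact inv_nonneg.mpr (by linarith)
          · rw [inv_le_comm₀ (by linarith) two_pos]; linarith
          · exact le_add_of_nonneg_left m.cast_nonneg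
      _ = (1 / 2) ^ m := by ring
  rw [logWeierstrassFactor, norm_mul, Complex.norm_natCast]
  gcongr

lemma differentiableAt_logWeierstrassFactor (hz : 2 * ‖z‖ < ‖a‖) :
    DifferentiableAt ℂ (logWeierstrassFactor a d m) z := by
  have hlog : DifferentiableAt ℂ (fun w ↦ log (1 + -(w / a))) z :=
    (by fun_prop : DifferentiableAt ℂ (fun w ↦ 1 + -(w / a)) z).clog
      (mem_slitPlane_of_norm_lt_one (by rw [norm_neg]; linarith [norm_div_lt_half hz]))
  have := differentiable_logTaylor (m + 1)
  unfold logWeierstrassFactor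
  fun_prop

end ElementaryFactor

section Tail

variable {ι : Type*} {a : ι → ℂ} {d m : ι → ℕ} {T : Finset ι} {R : ℝ} {z : ℂ}
  (hu : Summable fun i ↦ (d i : ℝ) * (1 / 2) ^ m i) (hT : ∀ i ∉ T, 2 * R ≤ ‖a i‖)
include hu hT

lemma hasProd_weierstrassFactor_compl (hz : ‖z‖ < R) :
    HasProd (fun i : ↥(T : Set ι)ᶜ ↦ weierstrassFactor (a i) (d i) (m i) z)
      (exp (∑' i : ↥(T : Set ι)ᶜ, logWeierstrassFactor (a i) (d i) (m i) z)) := by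
  have hfar (i : ↥(T : Set ι)ᶜ) : 2 * ‖z‖ < ‖a i‖ := by linarith [hT i i.2]
  have hs : Summable fun i : ↥(T : Set ι)ᶜ ↦ logWeierstrassFactor (a i) (d i) (m i) z :=
    (hu.comp_injective Subtype.val_injective).of_norm_bounded
      fun i ↦ norm_logWeierstrassFactor_le (hfar i)
  convert hs.hasSum.cexp using 1
  exact funext fun i ↦ weierstrassFactor_eq_exp_log (hfar i)

lemma weierstrassProduct_eqOn_ball :
    EqOn (weierstrassProduct a d m)
      (fun z ↦ (∏ i ∈ T, weierstrassFactor (a i) (d i) (m i) z) *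
        exp (∑' i : ↥(T : Set ι)ᶜ, logWeierstrassFactor (a i) (d i) (m i) z)) (ball 0 R) :=
  fun z hz ↦ ((T.hasProd fun i ↦ weierstrassFactor (a i) (d i) (m i) z).mul_compl
    (hasProd_weierstrassFactor_compl hu hT (mem_ball_zero_iff.mp hz))).tprod_eq

lemma differentiableOn_tsum_logWeierstrassFactor :
    DifferentiableOn ℂ (fun z ↦ ∑' i : ↥(T : Set ι)ᶜ, logWeierstrassFactor (a i) (d i) (m i) z)
      (ball 0 R) := by
  have hfar (i : ↥(T : Set ι)ᶜ) (z : ℂ) (hz : z ∈ ball 0 R) : 2 * ‖z‖ < ‖a i‖ := by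
    linarith [hT i i.2, mem_ball_zero_iff.mp hz]
  exact differentiableOn_tsum_of_summable_norm (hu.comp_injective Subtype.val_injective)
    (fun i z hz ↦ (differentiableAt_logWeierstrassFactor (hfar i z hz)).differentiableWithinAt)
    isOpen_ball fun i z hz ↦ norm_logWeierstrassFactor_le (hfar i z hz)

end Tail

section Product

variable {ι : Type*} {a : ι → ℂ} {d m : ι → ℕ}
  (hu : Summable fun i ↦ (d i : ℝ) * (1 / 2) ^ m i) (ha : Tendsto a cofinite (cocompact ℂ))
include hu ha

lemma weierstrassProduct_eventuallyEq_prod_mul (z₀ : ℂ) :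
    ∃ T : Finset ι, ∃ G : ℂ → ℂ, (∀ i ∉ T, a i ≠ z₀) ∧ AnalyticAt ℂ G z₀ ∧ G z₀ ≠ 0 ∧
      weierstrassProduct a d m =ᶠ[𝓝 z₀]
        fun z ↦ (∏ i ∈ T, weierstrassFactor (a i) (d i) (m i) z) * G z := by
  obtain ⟨T, hT⟩ := exists_finset_forall_notMem_lt_norm ha (2 * (‖z₀‖ + 1))
  have hball : ball (0 : ℂ) (‖z₀‖ + 1) ∈ 𝓝 z₀ := isOpen_ball.mem_nhds (by simp)
  refine ⟨T, fun z ↦ exp (∑' i : ↥(T : Set ι)ᶜ, logWeierstrassFactor (a i) (d i) (m i) z),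
    fun i hi hai ↦ ?_, ?_, exp_ne_zero _, ?_⟩
  · have := hT i hi
    rw [hai] at this
    linarith [norm_nonneg z₀]
  · exact (differentiableOn_tsum_logWeierstrassFactor hu fun i hi ↦ (hT i hi).le).cexp.analyticAt
      hball
  · exact eventually_of_mem hball (weierstrassProduct_eqOn_ball hu fun i hi ↦ (hT i hi).le)

lemma analyticAt_weierstrassProduct (z₀ : ℂ) : AnalyticAt ℂ (weierstrassProduct a d m) z₀ := by
  obtain ⟨T, G, -, hG, -, hW⟩ := weierstrassProduct_eventuallyEq_prod_mul hu ha z₀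
  refine (analyticAt_congr hW).mpr (AnalyticAt.mul ?_ hG)
  exact (Differentiable.fun_finsetProd fun i _ ↦ differentiable_weierstrassFactor).analyticAt z₀

lemma weierstrassProduct_ne_zero {z₀ : ℂ} (hz₀ : ∀ i, a i ≠ z₀) :
    weierstrassProduct a d m z₀ ≠ 0 := by
  obtain ⟨T, G, -, -, hG, hW⟩ := weierstrassProduct_eventuallyEq_prod_mul hu ha z₀
  rw [hW.eq_of_nhds]
  exact mul_ne_zero
    (Finset.prod_ne_zero_iff.mpr fun i _ ↦ weierstrassFactor_ne_zero (hz₀ i).symm) hG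

lemma natCast_le_analyticOrderAt_weierstrassProduct (j : ι) :
    (d j : ℕ∞) ≤ analyticOrderAt (weierstrassProduct a d m) (a j) := by
  classical
  obtain ⟨T, G, hT, hG, -, hW⟩ := weierstrassProduct_eventuallyEq_prod_mul hu ha (a j)
  have hj : j ∈ T := by_contra fun h ↦ hT j h rfl
  rw [natCast_le_analyticOrderAt (analyticAt_weierstrassProduct hu ha _)]
  refine ⟨fun z ↦ weierstrassUnit (a j) (d j) (m j) z *
    (∏ i ∈ T.erase j, weierstrassFactor (a i) (d i) (m i) z) * G z, ?_, ?_⟩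
  · have hdiff : Differentiable ℂ fun z ↦ weierstrassUnit (a j) (d j) (m j) z *
        ∏ i ∈ T.erase j, weierstrassFactor (a i) (d i) (m i) z :=
      differentiable_weierstrassUnit.mul
        (Differentiable.fun_finsetProd fun i _ ↦ differentiable_weierstrassFactor)
    exact (hdiff.analyticAt _).mul hG
  · filter_upwards [hW] with z hz
    rw [hz, ← Finset.mul_prod_erase T _ hj, weierstrassFactor, smul_eq_mul]
    ring

end Product

theorem exists_differentiable_natCast_le_analyticOrderAt {ι : Type*} {a : ι → ℂ}
    (ha : Tendsto a cofinite (cocompact ℂ)) (d : ι → ℕ) :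
    ∃ W : ℂ → ℂ, Differentiable ℂ W ∧ (∀ z, (∀ i, a i ≠ z) → W z ≠ 0) ∧
      ∀ i, (d i : ℕ∞) ≤ analyticOrderAt W (a i) := by
  have := countable_of_tendsto_cofinite_cocompact ha
  obtain ⟨e, he⟩ := exists_injective_nat ι
  have hu : Summable fun i ↦ (d i : ℝ) * (1 / 2) ^ (e i + d i) := by
    refine (summable_geometric_two.comp_injective he).of_nonneg_of_le (fun i ↦ by positivity)
      fun i ↦ ?_
    calc (d i : ℝ) * (1 / 2) ^ (e i + d i) = (d i * (1 / 2) ^ d i) * (1 / 2) ^ e i := by ring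
      _ ≤ 1 * (1 / 2) ^ e i := by gcongr; exact natCast_mul_half_pow_le_one _
      _ = (1 / 2) ^ e i := one_mul _
  exact ⟨weierstrassProduct a d fun i ↦ e i + d i,
    fun z ↦ (analyticAt_weierstrassProduct hu ha z).differentiableAt,
    fun _ hz ↦ weierstrassProduct_ne_zero hu ha hz,
    natCast_le_analyticOrderAt_weierstrassProduct hu ha⟩

section Meromorphic

variable {𝕜 E : Type*} [NontriviallyNormedField 𝕜] [NormedAddCommGroup E] [NormedSpace 𝕜 E]
  {f : 𝕜 → E} {U : Set 𝕜} {x : 𝕜}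

theorem MeromorphicOn.tendsto_cofinite_cocompact_coe_compl_analyticAt
    (hf : MeromorphicOn f univ) :
    Tendsto ((↑) : ↥{z | AnalyticAt 𝕜 f z}ᶜ → 𝕜) cofinite (cocompact 𝕜) := by
  obtain ⟨hclosed, hdiscrete⟩ := compl_mem_codiscrete_iff (S := {z | AnalyticAt 𝕜 f z}ᶜ) |>.mp
    (by rw [compl_compl]; exact hf.analyticAt_mem_codiscreteWithin)
  exact hclosed.tendsto_coe_cofinite_of_isDiscrete hdiscrete

theorem meromorphicOrderAt_smul_nonneg_of_le_analyticOrderAt {g : 𝕜 → 𝕜} {n : ℕ}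
    (hf : AnalyticAt 𝕜 (fun z ↦ (z - x) ^ n • f z) x) (hg : AnalyticAt 𝕜 g x)
    (hn : (n : ℕ∞) ≤ analyticOrderAt g x) : 0 ≤ meromorphicOrderAt (g • f) x := by
  obtain ⟨ψ, hψ, hgψ⟩ := (natCast_le_analyticOrderAt hg).mp hn
  have hfactor : g • f =ᶠ[𝓝 x] ψ • fun z ↦ (z - x) ^ n • f z := by
    filter_upwards [hgψ] with z hz
    simp [hz, smul_smul, mul_comm]
  rw [meromorphicOrderAt_congr (hfactor.filter_mono nhdsWithin_le_nhds)]
  exact (hψ.smul hf).meromorphicOrderAt_nonneg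

theorem MeromorphicOn.analyticOnNhd_toMeromorphicNFOn (hf : MeromorphicOn f U)
    (h : ∀ z ∈ U, 0 ≤ meromorphicOrderAt f z) : AnalyticOnNhd 𝕜 (toMeromorphicNFOn f U) U :=
  fun z hz ↦ (meromorphicNFOn_toMeromorphicNFOn f U hz).meromorphicOrderAt_nonneg_iff_analyticAt.mp
    (meromorphicOrderAt_toMeromorphicNFOn hf hz ▸ h z hz)

theorem AnalyticAt.toMeromorphicNFOn_eq_self (hf : MeromorphicOn f U) (hx : x ∈ U)
    (hfx : AnalyticAt 𝕜 f x) : toMeromorphicNFOn f U x = f x := by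
  rw [toMeromorphicNFOn_eq_toMeromorphicNFAt hf hx,
    toMeromorphicNFAt_eq_self.mpr hfx.meromorphicNFAt]

end Meromorphic

/-- Every function meromorphic on all of `ℂ` is a quotient of two entire functions. -/
theorem meromorphic_eq_quotient_of_entire (f : ℂ → ℂ) (hf : MeromorphicOn f Set.univ) :
    ∃ g h : ℂ → ℂ, Differentiable ℂ g ∧ Differentiable ℂ h ∧ h ≠ 0 ∧
      ∀ z : ℂ, h z ≠ 0 → f z = g z / h z := by
  set S := {z | AnalyticAt ℂ f z}ᶜ
  choose d hd using fun z ↦ hf z (mem_univ z)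
  obtain ⟨h, hh, hh_ne, hh_ord⟩ := exists_differentiable_natCast_le_analyticOrderAt
    hf.tendsto_cofinite_cocompact_coe_compl_analyticAt fun s : S ↦ d s
  have hhf : MeromorphicOn (h • f) univ :=
    AnalyticOnNhd.meromorphicOn (fun z _ ↦ hh.analyticAt z) |>.smul hf
  have hord (z : ℂ) : 0 ≤ meromorphicOrderAt (h • f) z := by
    by_cases hz : z ∈ S
    · exact meromorphicOrderAt_smul_nonneg_of_le_analyticOrderAt (hd z) (hh.analyticAt z)
        (hh_ord ⟨z, hz⟩)
    · exact ((hh.analyticAt z).smul (not_not.mp hz)).meromorphicOrderAt_nonneg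
  have hvanish (z : ℂ) (hz : z ∈ S) : h z = 0 := by
    have hd0 : d z ≠ 0 := fun h0 ↦ hz (by simpa [h0] using hd z)
    refine (hh.analyticAt z).analyticOrderAt_ne_zero.mp fun h0 ↦ hd0 ?_
    simpa [h0] using hh_ord ⟨z, hz⟩
  obtain ⟨z₀, hz₀⟩ := (hf.countable_compl_analyticAt_inter.dense_compl ℂ).nonempty
  refine ⟨toMeromorphicNFOn (h • f) univ, h,
    fun z ↦ (hhf.analyticOnNhd_toMeromorphicNFOn (fun z _ ↦ hord z) z trivial).differentiableAt,
    hh, fun h0 ↦ hh_ne z₀ (fun s hs ↦ hz₀ ⟨hs ▸ s.2, trivial⟩) (congrFun h0 z₀), fun z hz ↦ ?_⟩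
  have hfz : AnalyticAt ℂ f z := not_not.mp fun hS ↦ hz (hvanish z hS)
  rw [((hh.analyticAt z).smul hfz).toMeromorphicNFOn_eq_self hhf (mem_univ z), Pi.smul_apply',
    smul_eq_mul, mul_div_cancel_left₀ _ hz]
end

section
/- There exists a sequence of rational functions R_n, all holomorphic on U = {|z| < 1} ∪ {|z| > 1}, such that Σ R_n converges uniformly on compact subsets of U, equals 0 on {|z| < 1}, and equals 1 on {|z| > 1}; thus a series of rational functions converging uniformly on compacts of a disconnected open set can represent different analytic functions on the different components. -/
open Filter Metric

noncomputable def fW (N : ℕ) (z : ℂ) : ℂ := z ^ 2 ^ N / (1 + z ^ 2 ^ N)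

lemma aux_ne (z : ℂ) (hz : ‖z‖ ≠ 1) (k : ℕ) : (1 : ℂ) + z ^ 2 ^ k ≠ 0 := by
  intro h
  have h2 : z ^ 2 ^ k = -1 := by linear_combination h
  have h3 : ‖z‖ ^ 2 ^ k = 1 := by rw [← norm_pow, h2]; simp
  rcases lt_or_gt_of_ne hz with hlt | hgt
  · have := pow_lt_one₀ (norm_nonneg z) hlt (pow_ne_zero k two_ne_zero)
    linarith
  · have := one_lt_pow₀ hgt (pow_ne_zero k two_ne_zero)
    linarith

lemma aux_bound (c : ℝ) (hc : c < 1) (z : ℂ) (hz : ‖z‖ ≤ c) (m : ℕ) (hm : 0 < m) :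
    ‖z ^ m / (1 + z ^ m)‖ ≤ c ^ m / (1 - c ^ m) := by
  have hc0 : 0 ≤ c := le_trans (norm_nonneg z) hz
  have hcm : c ^ m < 1 := pow_lt_one₀ hc0 hc hm.ne'
  have hnum : ‖z ^ m‖ ≤ c ^ m := by
    rw [norm_pow]; exact pow_le_pow_left₀ (norm_nonneg z) hz m
  have hden : 1 - c ^ m ≤ ‖1 + z ^ m‖ := by
    have := norm_sub_norm_le (1 : ℂ) (-(z ^ m))
    simp only [norm_neg, norm_one, sub_neg_eq_add] at this
    linarith
  rw [norm_div]
  exact div_le_div₀ (by positivity) hnum (by linarith) hden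

lemma aux_tendsto (c : ℝ) (hc0 : 0 ≤ c) (hc : c < 1) :
    Tendsto (fun N : ℕ => c ^ 2 ^ N / (1 - c ^ 2 ^ N)) atTop (nhds 0) := by
  have h : Tendsto (fun N : ℕ => c ^ 2 ^ N) atTop (nhds 0) :=
    (tendsto_pow_atTop_nhds_zero_of_lt_one hc0 hc).comp
      (tendsto_pow_atTop_atTop_of_one_lt one_lt_two)
  have := h.div (tendsto_const_nhds.sub h) (by norm_num : (1 : ℝ) - 0 ≠ 0)
  simpa [Pi.div_def] using this

/-- Weierstrass (1880): there is a series of rational functions, holomorphic on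
`U = {|z| < 1} ∪ {|z| > 1}`, converging uniformly on compact subsets of `U`, whose sum
equals `0` on `{|z| < 1}` and `1` on `{|z| > 1}`. -/
theorem series_of_rational_functions_disconnected_sum :
    ∃ (R : ℕ → ℂ → ℂ) (S : ℂ → ℂ),
      (∀ n, ∃ p q : Polynomial ℂ, ∀ z : ℂ, ‖z‖ ≠ 1 →
        q.eval z ≠ 0 ∧ R n z = p.eval z / q.eval z) ∧
      (∀ K : Set ℂ, K ⊆ {z : ℂ | ‖z‖ ≠ 1} → IsCompact K →
        TendstoUniformlyOn (fun N z => ∑ n ∈ Finset.range N, R n z) S Filter.atTop K) ∧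
      (∀ z : ℂ, ‖z‖ < 1 → S z = 0) ∧ (∀ z : ℂ, 1 < ‖z‖ → S z = 1) := by
  refine ⟨fun n z => if n = 0 then fW 0 z else fW n z - fW (n - 1) z,
    fun z => if ‖z‖ < 1 then 0 else 1, ?_, ?_, ?_, ?_⟩
  · -- rationality
    intro n
    rcases Nat.eq_zero_or_pos n with rfl | hn
    · refine ⟨Polynomial.X ^ 2 ^ 0, 1 + Polynomial.X ^ 2 ^ 0, fun z hz => ?_⟩
      simp only [Polynomial.eval_add, Polynomial.eval_one, Polynomial.eval_pow,
        Polynomial.eval_X]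
      exact ⟨aux_ne z hz 0, by simp [fW]⟩
    · refine ⟨Polynomial.X ^ 2 ^ n * (1 + Polynomial.X ^ 2 ^ (n - 1))
        - (1 + Polynomial.X ^ 2 ^ n) * Polynomial.X ^ 2 ^ (n - 1),
        (1 + Polynomial.X ^ 2 ^ n) * (1 + Polynomial.X ^ 2 ^ (n - 1)), fun z hz => ?_⟩
      have h1 := aux_ne z hz n
      have h2 := aux_ne z hz (n - 1)
      simp only [Polynomial.eval_add, Polynomial.eval_one, Polynomial.eval_pow,
        Polynomial.eval_X, Polynomial.eval_mul, Polynomial.eval_sub]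
      refine ⟨mul_ne_zero h1 h2, ?_⟩
      rw [if_neg hn.ne', fW, fW, div_sub_div _ _ h1 h2]
  · -- uniform convergence
    intro K hKU hK
    -- partial sums telescope
    have hsum : ∀ (N : ℕ) (z : ℂ), ∑ n ∈ Finset.range (N + 1),
        (if n = 0 then fW 0 z else fW n z - fW (n - 1) z) = fW N z := by
      intro N z
      induction N with
      | zero => simp
      | succ N ih => rw [Finset.sum_range_succ, ih]; simp
    -- find the constant c
    obtain ⟨c, hc0, hc1, hcK⟩ : ∃ c, 0 ≤ c ∧ c < 1 ∧ ∀ z ∈ K,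
        (‖z‖ < 1 → ‖z‖ ≤ c) ∧ (1 < ‖z‖ → ‖z⁻¹‖ ≤ c) := by
      have hK1 : IsCompact (K ∩ closedBall 0 1) :=
        hK.inter_right isClosed_closedBall
      have hK2 : IsCompact (K ∩ {z : ℂ | 1 ≤ ‖z‖}) :=
        hK.inter_right (isClosed_le continuous_const continuous_norm)
      obtain ⟨c1, hc10, hc11, h1⟩ : ∃ c1, 0 ≤ c1 ∧ c1 < 1 ∧
          ∀ z ∈ K, ‖z‖ < 1 → ‖z‖ ≤ c1 := by
        rcases (K ∩ closedBall 0 1).eq_empty_or_nonempty with he | hne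
        · refine ⟨0, le_refl 0, one_pos, fun z hz hlt => absurd ?_ (Set.eq_empty_iff_forall_notMem.mp he z)⟩
          exact ⟨hz, by simpa using hlt.le⟩
        · obtain ⟨z0, hz0, hmax⟩ := hK1.exists_isMaxOn hne
            (continuous_norm.continuousOn)
          refine ⟨‖z0‖, norm_nonneg _, ?_, fun z hz hlt => hmax ⟨hz, by simpa using hlt.le⟩⟩
          have : ‖z0‖ ≤ 1 := by simpa using hz0.2
          exact lt_of_le_of_ne this (hKU hz0.1)
      obtain ⟨c2, hc20, hc21, h2⟩ : ∃ c2, 0 ≤ c2 ∧ c2 < 1 ∧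
          ∀ z ∈ K, 1 < ‖z‖ → ‖z⁻¹‖ ≤ c2 := by
        rcases (K ∩ {z : ℂ | 1 ≤ ‖z‖}).eq_empty_or_nonempty with he | hne
        · refine ⟨0, le_refl 0, one_pos, fun z hz hlt => absurd ?_ (Set.eq_empty_iff_forall_notMem.mp he z)⟩
          exact ⟨hz, hlt.le⟩
        · obtain ⟨z0, hz0, hmin⟩ := hK2.exists_isMinOn hne
            (continuous_norm.continuousOn)
          have hz01 : 1 < ‖z0‖ := lt_of_le_of_ne hz0.2 (Ne.symm (hKU hz0.1))
          refine ⟨‖z0‖⁻¹, by positivity, inv_lt_one_of_one_lt₀ hz01, fun z hz hlt => ?_⟩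
          rw [norm_inv]
          exact inv_anti₀ (by linarith) (hmin ⟨hz, hlt.le⟩)
      exact ⟨max c1 c2, le_trans hc10 (le_max_left _ _), max_lt hc11 hc21,
        fun z hz => ⟨fun h => le_trans (h1 z hz h) (le_max_left _ _),
          fun h => le_trans (h2 z hz h) (le_max_right _ _)⟩⟩
    rw [Metric.tendstoUniformlyOn_iff]
    intro ε hε
    have htd : Tendsto (fun N : ℕ => c ^ 2 ^ (N - 1) / (1 - c ^ 2 ^ (N - 1)))
        atTop (nhds 0) := (aux_tendsto c hc0 hc1).comp (tendsto_sub_atTop_nat 1)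
    filter_upwards [htd.eventually (gt_mem_nhds hε), eventually_ge_atTop 1]
      with N hN hN1 z hzK
    obtain ⟨N', rfl⟩ : ∃ N', N = N' + 1 := ⟨N - 1, (Nat.succ_pred_eq_of_pos hN1).symm⟩
    rw [hsum N' z]
    simp only [Nat.add_sub_cancel] at hN
    have hz1 : ‖z‖ ≠ 1 := hKU hzK
    have hne := aux_ne z hz1 N'
    rcases lt_or_gt_of_ne hz1 with hlt | hgt
    · -- |z| < 1
      rw [if_pos hlt, dist_eq_norm, zero_sub, norm_neg]
      calc ‖fW N' z‖ ≤ c ^ 2 ^ N' / (1 - c ^ 2 ^ N') :=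
            aux_bound c hc1 z ((hcK z hzK).1 hlt) _ (by positivity)
        _ < ε := hN
    · -- |z| > 1
      rw [if_neg (by linarith), dist_eq_norm]
      have hz0 : z ≠ 0 := by
        intro h; rw [h] at hgt; norm_num at hgt
      have hzinv : ‖z⁻¹‖ ≠ 1 := by
        rw [norm_inv]; intro h
        exact hz1 (by rw [← inv_inv ‖z‖, h, inv_one])
      have hne' := aux_ne z⁻¹ hzinv N'
      have hzM : z ^ 2 ^ N' ≠ 0 := pow_ne_zero _ hz0
      have key : (1 : ℂ) - fW N' z = fW N' z⁻¹ := by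
        rw [fW, fW, inv_pow]
        rw [inv_pow] at hne'
        field_simp
        linear_combination -(mul_inv_cancel₀ hne)
      rw [key]
      calc ‖fW N' z⁻¹‖ ≤ c ^ 2 ^ N' / (1 - c ^ 2 ^ N') :=
            aux_bound c hc1 z⁻¹ ((hcK z hzK).2 hgt) _ (by positivity)
        _ < ε := hN
  · exact fun z hz => if_pos hz
  · exact fun z hz => if_neg (not_lt.mpr hz.le)
end

section
/- Weierstrass's counterexample to the Dirichlet principle: the infimum of the Dirichlet-type energy J(y) = ∫_{−1}^{1} (x · y'(x))² dx over all continuously differentiable functions y : [−1, 1] → ℝ with y(−1) = −1 and y(1) = 1 equals 0, but no admissible function attains this infimum. -/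
/-!
The energy is nonnegative, and the smoothed steps `arctan (x / ε) / arctan (1 / ε)` have
energy at most `2ε / arctan (1 / ε) → 0`: their derivative concentrates near `x = 0`, where the
weight `x²` kills it. Conversely, zero energy forces `x y' = 0` a.e., hence `y' = 0` a.e., and
then `y 1 - y (-1) = ∫ y' = 0` contradicts the boundary values.
-/

open Set Real MeasureTheory intervalIntegral

section Positivity

variable {f : ℝ → ℝ} {a b : ℝ}

theorem integral_derivWithin_Icc_eq_sub (hab : a < b) (hf : ContDiffOn ℝ 1 f (Icc a b)) :
    ∫ x in a..b, derivWithin f (Icc a b) x = f b - f a := by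
  refine integral_eq_sub_of_hasDeriv_right_of_le hab.le hf.continuousOn (fun x hx => ?_)
    ((hf.continuousOn_derivWithin (uniqueDiffOn_Icc hab) le_rfl).intervalIntegrable_of_Icc hab.le)
  exact ((hf.differentiableOn one_ne_zero) x (Ioo_subset_Icc_self hx)).hasDerivWithinAt
    |>.mono_of_mem_nhdsWithin (mem_nhdsWithin_of_mem_nhds (Icc_mem_nhds hx.1 hx.2))

theorem integral_mul_derivWithin_sq_pos (hab : a < b) (hf : ContDiffOn ℝ 1 f (Icc a b))
    (hne : f a ≠ f b) : 0 < ∫ x in a..b, (x * derivWithin f (Icc a b) x) ^ 2 := by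
  set g := derivWithin f (Icc a b)
  have hg : ContinuousOn g (Icc a b) :=
    hf.continuousOn_derivWithin (uniqueDiffOn_Icc hab) le_rfl
  refine (integral_nonneg hab.le fun x _ => sq_nonneg _).lt_of_ne fun h => hne ?_
  have hsq : (fun x => (x * g x) ^ 2) =ᵐ[volume.restrict (Ioc a b)] 0 :=
    (integral_eq_zero_iff_of_le_of_nonneg_ae hab.le (ae_of_all _ fun _ => sq_nonneg _)
      (((continuousOn_id.mul hg).pow 2).intervalIntegrable_of_Icc hab.le)).1 h.symm
  have hg0 : g =ᵐ[volume.restrict (Ioc a b)] 0 := by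
    filter_upwards [hsq, Measure.ae_ne _ 0] with x hx hx0
    simpa [hx0] using hx
  have hftc := integral_derivWithin_Icc_eq_sub hab hf
  rw [integral_of_le hab.le, integral_eq_zero_of_ae hg0] at hftc
  linarith

end Positivity

section Approximation

variable {ε : ℝ}

theorem hasDerivAt_arctan_div (hε : ε ≠ 0) (x : ℝ) :
    HasDerivAt (fun t => arctan (t / ε)) (ε / (ε ^ 2 + x ^ 2)) x := by
  refine ((hasDerivAt_id x).div_const ε).arctan.congr_deriv ?_
  have : ε ^ 2 + x ^ 2 ≠ 0 := by positivity
  field_simp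
  simp

theorem pi_div_four_le_arctan_one_div (hε : 0 < ε) (hε1 : ε ≤ 1) : π / 4 ≤ arctan (1 / ε) :=
  arctan_one ▸ arctan_strictMono.monotone (one_le_one_div hε hε1)

noncomputable def weierstrassApprox (ε x : ℝ) : ℝ := arctan (x / ε) / arctan (1 / ε)

theorem contDiff_weierstrassApprox {n : WithTop ℕ∞} : ContDiff ℝ n (weierstrassApprox ε) :=
  (contDiff_arctan.comp (contDiff_id.div_const ε)).div_const _

theorem weierstrassApprox_one (hε : ε ≠ 0) : weierstrassApprox ε 1 = 1 :=
  div_self (by simpa [arctan_eq_zero_iff] using hε)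

theorem weierstrassApprox_neg (x : ℝ) : weierstrassApprox ε (-x) = -weierstrassApprox ε x := by
  simp only [weierstrassApprox, neg_div, arctan_neg]

noncomputable def weierstrassEnergy (y : ℝ → ℝ) : ℝ :=
  ∫ x in (-1 : ℝ)..1, (x * derivWithin y (Icc (-1) 1) x) ^ 2

theorem weierstrassEnergy_approx_le (hε : 0 < ε) :
    weierstrassEnergy (weierstrassApprox ε) ≤ 2 * ε / arctan (1 / ε) := by
  set A := arctan (1 / ε)
  have hA : 0 < A := arctan_pos.2 (by positivity)
  have hden (x : ℝ) : ε ^ 2 + x ^ 2 ≠ 0 := by positivity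
  have hderiv (x : ℝ) : HasDerivAt (weierstrassApprox ε) (ε / (ε ^ 2 + x ^ 2) / A) x :=
    (hasDerivAt_arctan_div hε.ne' x).div_const A
  calc weierstrassEnergy (weierstrassApprox ε)
      = ∫ x in (-1 : ℝ)..1, (x * (ε / (ε ^ 2 + x ^ 2) / A)) ^ 2 := by
        refine integral_congr fun x hx => ?_
        rw [uIcc_of_le (by norm_num)] at hx
        simp only [(hderiv x).hasDerivWithinAt.derivWithin (uniqueDiffOn_Icc (by norm_num) x hx)]
    _ ≤ ∫ x in (-1 : ℝ)..1, ε / A ^ 2 * (ε / (ε ^ 2 + x ^ 2)) := by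
        refine integral_mono_on (by norm_num) ?_ ?_ fun x _ => ?_
        · apply Continuous.intervalIntegrable; fun_prop (disch := first | exact hA.ne' | exact hden)
        · apply Continuous.intervalIntegrable; fun_prop (disch := first | exact hA.ne' | exact hden)
        have h : 0 < ε ^ 2 + x ^ 2 := by positivity
        field_simp
        nlinarith
    _ = 2 * ε / A := by
        rw [intervalIntegral.integral_const_mul, integral_div_sq_add_sq, neg_div, arctan_neg]
        field_simp
        ring

theorem weierstrassEnergy_approx_le_three_mul (hε : 0 < ε) (hε1 : ε ≤ 1) :
    weierstrassEnergy (weierstrassApprox ε) ≤ 3 * ε := by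
  have hA := pi_div_four_le_arctan_one_div hε hε1
  calc weierstrassEnergy (weierstrassApprox ε) ≤ 2 * ε / arctan (1 / ε) :=
        weierstrassEnergy_approx_le hε
    _ ≤ 2 * ε / (π / 4) := by gcongr
    _ ≤ 3 * ε := by
        rw [div_le_iff₀ (by positivity)]
        nlinarith [pi_gt_three]

end Approximation

/-- Weierstrass's counterexample to the Dirichlet principle: over all `C¹` functions
`y : [−1,1] → ℝ` with `y(−1) = −1`, `y(1) = 1`, the infimum of
`J(y) = ∫_{−1}^{1} (x y'(x))² dx` is `0`, but it is attained by no admissible function. -/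
theorem weierstrass_dirichlet_counterexample :
    IsGLB ((fun y : ℝ → ℝ =>
        ∫ x in (-1 : ℝ)..1, (x * derivWithin y (Set.Icc (-1 : ℝ) 1) x) ^ 2) ''
      {y : ℝ → ℝ | ContDiffOn ℝ 1 y (Set.Icc (-1 : ℝ) 1) ∧ y (-1) = -1 ∧ y 1 = 1}) 0 ∧
    ∀ y : ℝ → ℝ, ContDiffOn ℝ 1 y (Set.Icc (-1 : ℝ) 1) → y (-1) = -1 → y 1 = 1 →
      0 < ∫ x in (-1 : ℝ)..1, (x * derivWithin y (Set.Icc (-1 : ℝ) 1) x) ^ 2 := by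
  change IsGLB (weierstrassEnergy '' _) 0 ∧ _
  refine ⟨⟨?_, fun w hw => le_of_forall_pos_le_add fun δ hδ => ?_⟩, fun y hy h₁ h₂ => ?_⟩
  · rintro _ ⟨y, -, rfl⟩
    exact integral_nonneg (by norm_num) fun x _ => sq_nonneg _
  · set ε := min 1 (δ / 3)
    have hε : 0 < ε := lt_min one_pos (by positivity)
    have hone := weierstrassApprox_one hε.ne'
    have hadm : weierstrassApprox ε ∈
        {y : ℝ → ℝ | ContDiffOn ℝ 1 y (Icc (-1) 1) ∧ y (-1) = -1 ∧ y 1 = 1} :=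
      ⟨contDiff_weierstrassApprox.contDiffOn, by rw [weierstrassApprox_neg, hone], hone⟩
    calc w ≤ weierstrassEnergy (weierstrassApprox ε) := hw ⟨_, hadm, rfl⟩
      _ ≤ 3 * ε := weierstrassEnergy_approx_le_three_mul hε (min_le_left _ _)
      _ ≤ 0 + δ := by linarith [min_le_right 1 (δ / 3)]
  · exact integral_mul_derivWithin_sq_pos (by norm_num) hy (by rw [h₁, h₂]; norm_num)
end
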